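/- Let (Ω, F, P) be a probability space, G ⊆ F a sub-σ-algebra, and X : Ω → ℝ^d a square-integrable random vector with MMSE reconstruction X̃ := E[X | G]. Then for every δ > 0 there exists a Markov kernel κ from ℝ^d to ℝ^d such that (i) (P∘X̃⁻¹).bind κ = P∘X⁻¹ (so a reconstruction drawn as X̂ ~ κ(X̃) has exactly the law of X, i.e. zero framewise-marginal perception loss), and (ii) ∫_Ω ∫_{ℝ^d} ‖X(ω) − y‖² κ(X̃(ω))(dy) P(dω) ≤ E‖X − X̃‖² + W₂²(law of X̃, law of X) + δ. -/

import Mathlib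

open MeasureTheory ProbabilityTheory

/-- Squared Wasserstein-2 distance between two measures, as the infimum of the
expected squared distance over all couplings. -/
noncomputable def W2sq {E : Type*} [NormedAddCommGroup E] [MeasurableSpace E]
    (μ ν : Measure E) : ℝ :=
  sInf { c : ℝ | ∃ π : Measure (E × E), IsProbabilityMeasure π ∧
    π.map Prod.fst = μ ∧ π.map Prod.snd = ν ∧ c = ∫ p, ‖p.1 - p.2‖ ^ 2 ∂π }

/-! Take a coupling `π` of the laws of `X̃ = E[X | G]` and `X` whose cost is within `δ` of `W₂²`,
and let `κ` be its disintegration along the first coordinate, so that `X̃` pushed through `κ` has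
the law of `X`. Expanding `‖X - y‖² = ‖X - X̃‖² + 2⟪X - X̃, X̃ - y⟫ + ‖X̃ - y‖²` and averaging `y`
over `κ X̃`, the cross term becomes `⟪X - X̃, g X̃⟫`, where `g x` is `x` minus the barycenter of
`κ x`. Jensen puts `g X̃` in `L²`, and it is `G`-measurable, so the cross term has zero mean by
orthogonality of `X - E[X | G]` to `L²(G)`; the last term integrates to the cost of `π`. -/

section Barycenter

variable {E : Type*} [NormedAddCommGroup E] [InnerProductSpace ℝ E] [CompleteSpace E]
  [MeasurableSpace E] [BorelSpace E] [SecondCountableTopology E]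

lemma integral_norm_sub_sq_eq (ν : Measure E) [IsProbabilityMeasure ν] {x : E}
    (hx : Integrable (fun y => ‖x - y‖ ^ 2) ν) (z : E) :
    ∫ y, ‖z - y‖ ^ 2 ∂ν
      = ‖z - x‖ ^ 2 + 2 * inner ℝ (z - x) (x - ∫ y, y ∂ν) + ∫ y, ‖x - y‖ ^ 2 ∂ν := by
  have hdev : Integrable (fun y => x - y) ν :=
    ((memLp_two_iff_integrable_sq_norm (by fun_prop)).mpr hx).integrable one_le_two
  have hid : Integrable (fun y : E => y) ν := by
    simpa only [Pi.sub_def, sub_sub_cancel] using (integrable_const x).sub hdev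
  have hcross : Integrable (fun y => ‖z - x‖ ^ 2 + 2 * inner ℝ (z - x) (x - y)) ν :=
    (integrable_const _).add ((hdev.const_inner (z - x)).const_mul 2)
  calc ∫ y, ‖z - y‖ ^ 2 ∂ν
      = ∫ y, (‖z - x‖ ^ 2 + 2 * inner ℝ (z - x) (x - y) + ‖x - y‖ ^ 2) ∂ν := by
        congr with y
        rw [← sub_add_sub_cancel z x y, norm_add_sq_real]
    _ = ‖z - x‖ ^ 2 + 2 * inner ℝ (z - x) (x - ∫ y, y ∂ν) + ∫ y, ‖x - y‖ ^ 2 ∂ν := by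
        rw [integral_add hcross hx, integral_add (integrable_const _)
          ((hdev.const_inner (z - x)).const_mul 2), integral_const_mul, integral_inner hdev,
          integral_sub (integrable_const x) hid]
        simp

lemma norm_sub_integral_sq_le (ν : Measure E) [IsProbabilityMeasure ν] {x : E}
    (hx : Integrable (fun y => ‖x - y‖ ^ 2) ν) :
    ‖x - ∫ y, y ∂ν‖ ^ 2 ≤ ∫ y, ‖x - y‖ ^ 2 ∂ν := by
  have h := integral_norm_sub_sq_eq ν hx (∫ y, y ∂ν)
  rw [← neg_sub x, inner_neg_left, real_inner_self_eq_norm_sq, norm_neg] at h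
  have h0 : 0 ≤ ∫ y, ‖(∫ y, y ∂ν) - y‖ ^ 2 ∂ν := integral_nonneg fun y => by positivity
  linarith

end Barycenter

section Orthogonality

variable {Ω E : Type*} {m mΩ : MeasurableSpace Ω} {μ : Measure Ω}
  [NormedAddCommGroup E] [InnerProductSpace ℝ E]

lemma MeasureTheory.MemLp.integrable_inner {f g : Ω → E} (hf : MemLp f 2 μ) (hg : MemLp g 2 μ) :
    Integrable (fun ω => inner ℝ (f ω) (g ω)) μ :=
  (L2.integrable_inner (𝕜 := ℝ) hf.toLp hg.toLp).congr <| by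
    filter_upwards [hf.coeFn_toLp, hg.coeFn_toLp] with ω hfω hgω
    rw [hfω, hgω]

variable [CompleteSpace E] [IsFiniteMeasure μ]

lemma integral_inner_condExp_eq (hm : m ≤ mΩ) {X Z : Ω → E} (hX : MemLp X 2 μ)
    (hZ : MemLp Z 2 μ) (hZm : AEStronglyMeasurable[m] Z μ) :
    ∫ ω, inner ℝ (μ[X|m] ω) (Z ω) ∂μ = ∫ ω, inner ℝ (X ω) (Z ω) ∂μ := by
  have h := inner_condExpL2_eq_inner_fun (𝕜 := ℝ) hm hX.toLp hZ.toLp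
    (hZm.congr hZ.coeFn_toLp.symm)
  rw [L2.inner_def, L2.inner_def] at h
  convert h using 1 <;> refine integral_congr_ae ?_
  · filter_upwards [hX.condExpL2_ae_eq_condExp (𝕜 := ℝ) hm, hZ.coeFn_toLp] with ω hXω hZω
    rw [hXω, hZω]
  · filter_upwards [hX.coeFn_toLp, hZ.coeFn_toLp] with ω hXω hZω
    rw [hXω, hZω]

lemma integral_inner_sub_condExp_eq_zero (hm : m ≤ mΩ) {X Z : Ω → E} (hX : MemLp X 2 μ)
    (hZ : MemLp Z 2 μ) (hZm : AEStronglyMeasurable[m] Z μ) :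
    ∫ ω, inner ℝ (X ω - μ[X|m] ω) (Z ω) ∂μ = 0 := by
  simp_rw [inner_sub_left]
  rw [integral_sub (hX.integrable_inner hZ) ((hX.condExp one_le_two).integrable_inner hZ),
    integral_inner_condExp_eq hm hX hZ hZm, sub_self]

end Orthogonality

section Kernel

variable {E : Type*} [NormedAddCommGroup E] [MeasurableSpace E] {ν : Measure E} [SFinite ν]
  {κ : Kernel E E}

lemma integrable_integral_norm_sub_sq_of_compProd [IsSFiniteKernel κ]
    (h : Integrable (fun p : E × E => ‖p.1 - p.2‖ ^ 2) (ν ⊗ₘ κ)) :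
    (∀ᵐ x ∂ν, Integrable (fun y => ‖x - y‖ ^ 2) (κ x)) ∧
      Integrable (fun x => ∫ y, ‖x - y‖ ^ 2 ∂κ x) ν := by
  rw [Measure.integrable_compProd_iff h.aestronglyMeasurable] at h
  exact ⟨h.1, by simpa only [norm_pow, norm_norm] using h.2⟩

lemma memLp_sub_integral_kernel [InnerProductSpace ℝ E] [CompleteSpace E] [BorelSpace E]
    [SecondCountableTopology E] [IsMarkovKernel κ]
    (h : Integrable (fun p : E × E => ‖p.1 - p.2‖ ^ 2) (ν ⊗ₘ κ)) :
    MemLp (fun x => x - ∫ y, y ∂κ x) 2 ν := by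
  obtain ⟨hfib, hint⟩ := integrable_integral_norm_sub_sq_of_compProd h
  have hmeas : StronglyMeasurable fun x => x - ∫ y, y ∂κ x :=
    stronglyMeasurable_id.sub measurable_snd.stronglyMeasurable.integral_kernel_prod_right'
  refine (memLp_two_iff_integrable_sq_norm hmeas.aestronglyMeasurable).mpr <|
    hint.mono' (hmeas.norm.pow 2).aestronglyMeasurable ?_
  filter_upwards [hfib] with x hx
  rw [Real.norm_of_nonneg (by positivity)]
  exact norm_sub_integral_sq_le (κ x) hx

end Kernel

theorem integral_integral_norm_sub_sq_condExp {Ω E : Type*} {m mΩ : MeasurableSpace Ω}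
    [NormedAddCommGroup E] [InnerProductSpace ℝ E] [CompleteSpace E] [MeasurableSpace E]
    [BorelSpace E] [SecondCountableTopology E] (hm : m ≤ mΩ) (μ : Measure Ω)
    [IsProbabilityMeasure μ] {X : Ω → E} (hX : MemLp X 2 μ) (κ : Kernel E E) [IsMarkovKernel κ]
    (hκ : Integrable (fun p : E × E => ‖p.1 - p.2‖ ^ 2) (μ.map μ[X|m] ⊗ₘ κ)) :
    ∫ ω, ∫ y, ‖X ω - y‖ ^ 2 ∂κ (μ[X|m] ω) ∂μ
      = ∫ ω, ‖X ω - μ[X|m] ω‖ ^ 2 ∂μ + ∫ p, ‖p.1 - p.2‖ ^ 2 ∂(μ.map μ[X|m] ⊗ₘ κ) := by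
  set T := μ[X|m]
  have hTm : StronglyMeasurable[m] T := stronglyMeasurable_condExp
  have hT : Measurable T := (hTm.mono hm).measurable
  obtain ⟨hfib, hint⟩ := integrable_integral_norm_sub_sq_of_compProd hκ
  set g : E → E := fun x => x - ∫ y, y ∂κ x
  have hgm : StronglyMeasurable g :=
    stronglyMeasurable_id.sub measurable_snd.stronglyMeasurable.integral_kernel_prod_right'
  have hgT : MemLp (g ∘ T) 2 μ :=
    (memLp_map_measure_iff hgm.aestronglyMeasurable hT.aemeasurable).mp
      (memLp_sub_integral_kernel hκ)
  have hXT : MemLp (fun ω => X ω - T ω) 2 μ := hX.sub (hX.condExp one_le_two)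
  have hcross : ∫ ω, inner ℝ (X ω - T ω) (g (T ω)) ∂μ = 0 :=
    integral_inner_sub_condExp_eq_zero hm hX hgT
      (hgm.comp_measurable hTm.measurable).aestronglyMeasurable
  have hsplit : (fun ω => ∫ y, ‖X ω - y‖ ^ 2 ∂κ (T ω)) =ᵐ[μ] fun ω =>
      ‖X ω - T ω‖ ^ 2 + 2 * inner ℝ (X ω - T ω) (g (T ω)) + ∫ y, ‖T ω - y‖ ^ 2 ∂κ (T ω) := by
    filter_upwards [ae_of_ae_map hT.aemeasurable hfib] with ω hω
    exact integral_norm_sub_sq_eq (κ (T ω)) hω (X ω)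
  rw [integral_congr_ae hsplit, integral_add, integral_add, integral_const_mul, hcross,
    Measure.integral_compProd hκ, ← integral_map hT.aemeasurable hint.aestronglyMeasurable]
  · ring
  · exact hXT.norm.integrable_sq
  · exact (hXT.integrable_inner hgT).const_mul 2
  · exact (hXT.norm.integrable_sq).add ((hXT.integrable_inner hgT).const_mul 2)
  · exact (integrable_map_measure hint.aestronglyMeasurable hT.aemeasurable).mp hint

section Coupling

variable {E : Type*} [NormedAddCommGroup E] [MeasurableSpace E]

lemma exists_coupling_lt_W2sq_add (μ ν : Measure E) [IsProbabilityMeasure μ]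
    [IsProbabilityMeasure ν] {δ : ℝ} (hδ : 0 < δ) :
    ∃ π : Measure (E × E), IsProbabilityMeasure π ∧ π.fst = μ ∧ π.snd = ν ∧
      ∫ p, ‖p.1 - p.2‖ ^ 2 ∂π < W2sq μ ν + δ := by
  by_contra! h
  have : W2sq μ ν + δ ≤ W2sq μ ν :=
    le_csInf ⟨_, μ.prod ν, inferInstance, Measure.fst_prod, Measure.snd_prod, rfl⟩
      fun _ ⟨π, hπ, hπ₁, hπ₂, hc⟩ => hc ▸ h π hπ hπ₁ hπ₂
  linarith

lemma integrable_norm_sub_sq_of_memLp_id [BorelSpace E] [SecondCountableTopology E]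
    {π : Measure (E × E)} (h₁ : MemLp id 2 π.fst) (h₂ : MemLp id 2 π.snd) :
    Integrable (fun p : E × E => ‖p.1 - p.2‖ ^ 2) π := by
  have h₁' := (memLp_map_measure_iff aestronglyMeasurable_id measurable_fst.aemeasurable).mp h₁
  have h₂' := (memLp_map_measure_iff aestronglyMeasurable_id measurable_snd.aemeasurable).mp h₂
  exact (h₁'.sub h₂').norm.integrable_sq

end Coupling

theorem statement1 {Ω : Type*} {G F : MeasurableSpace Ω} (hG : G ≤ F)
    (P : Measure Ω) [IsProbabilityMeasure P] {d : ℕ}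
    (X : Ω → EuclideanSpace ℝ (Fin d)) (hX : MemLp X 2 P)
    (δ : ℝ) (hδ : 0 < δ) :
    ∃ κ : Kernel (EuclideanSpace ℝ (Fin d)) (EuclideanSpace ℝ (Fin d)),
      IsMarkovKernel κ ∧
      (P.map (P[X|G])).bind (fun x => κ x) = P.map X ∧
      ∫ ω, ∫ y, ‖X ω - y‖ ^ 2 ∂(κ ((P[X|G]) ω)) ∂P ≤
        (∫ ω, ‖X ω - (P[X|G]) ω‖ ^ 2 ∂P) + W2sq (P.map (P[X|G])) (P.map X) + δ := by
  have hT : Measurable (P[X|G]) := (stronglyMeasurable_condExp.mono hG).measurable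
  have hXm : AEMeasurable X P := hX.aestronglyMeasurable.aemeasurable
  have := Measure.isProbabilityMeasure_map hT.aemeasurable (μ := P)
  have := Measure.isProbabilityMeasure_map hXm
  obtain ⟨π, hπ, hπ₁, hπ₂, hπc⟩ := exists_coupling_lt_W2sq_add (P.map (P[X|G])) (P.map X) hδ
  have hdis : P.map (P[X|G]) ⊗ₘ π.condKernel = π := hπ₁ ▸ π.disintegrate π.condKernel
  have hcost : Integrable (fun p : _ × _ => ‖p.1 - p.2‖ ^ 2) π :=
    integrable_norm_sub_sq_of_memLp_id
      (hπ₁ ▸ (memLp_map_measure_iff aestronglyMeasurable_id hT.aemeasurable).mpr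
        (hX.condExp one_le_two))
      (hπ₂ ▸ (memLp_map_measure_iff aestronglyMeasurable_id hXm).mpr hX)
  refine ⟨π.condKernel, inferInstance, ?_, ?_⟩
  · rw [← hπ₂, ← Measure.snd_compProd, hdis]
  · rw [integral_integral_norm_sub_sq_condExp hG P hX π.condKernel (by rwa [hdis]), hdis]
    linarith
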